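/- arXiv:1106.4720 — 2 statements merged into one kernel-verified Lean document; each statement's English description precedes it below -/
import Mathlib

section
/- For the 3-dimensional unimodular Lie algebra with Milnor basis {u,v,w} (brackets [u,v]=aw, [v,w]=bu, [w,u]=cv) and left invariant metric making x=⟨u,u⟩, y=⟨v,v⟩, z=⟨w,w⟩ with u,v,w orthogonal, the Ricci curvature satisfies Ric(u,u) = (1/(2yz))(b²x² − (cy − az)²). -/
noncomputable section

/-- The Milnor bracket `[u,v] = a•w`, `[v,w] = b•u`, `[w,u] = c•v` on `ℝ³`. -/
def milnorBracket (a b c : ℝ) (x y : Fin 3 → ℝ) : Fin 3 → ℝ :=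
  ![b * (x 1 * y 2 - x 2 * y 1), c * (x 2 * y 0 - x 0 * y 2), a * (x 0 * y 1 - x 1 * y 0)]

/-- The inner product making `u, v, w` orthogonal with `⟨u,u⟩ = x`, `⟨v,v⟩ = y`, `⟨w,w⟩ = z`. -/
def gMet (x y z : ℝ) (p q : Fin 3 → ℝ) : ℝ :=
  x * p 0 * q 0 + y * p 1 * q 1 + z * p 2 * q 2

/-- The orthonormal basis `u/√x, v/√y, w/√z`. -/
def onb (x y z : ℝ) : Fin 3 → (Fin 3 → ℝ) :=
  ![(Real.sqrt x)⁻¹ • (Pi.single 0 1 : Fin 3 → ℝ),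
    (Real.sqrt y)⁻¹ • (Pi.single 1 1 : Fin 3 → ℝ),
    (Real.sqrt z)⁻¹ • (Pi.single 2 1 : Fin 3 → ℝ)]

/-- The Killing form `B(X,Y) = tr(ad_X ∘ ad_Y)`. -/
def killingF (a b c : ℝ) (X Y : Fin 3 → ℝ) : ℝ :=
  ∑ i : Fin 3, milnorBracket a b c X (milnorBracket a b c Y (Pi.single i 1)) i

/-- The Ricci curvature of the left invariant metric, via the unimodular formula
`Ric(X,X) = −½B(X,X) − ½Σᵢ|[X,eᵢ]|² + ¼Σᵢⱼ⟨[eᵢ,eⱼ],X⟩²` for an orthonormal basis `(eᵢ)`. -/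
def ricQ (a b c x y z : ℝ) (X : Fin 3 → ℝ) : ℝ :=
  -(1/2) * killingF a b c X X
    - (1/2) * ∑ i : Fin 3,
        gMet x y z (milnorBracket a b c X (onb x y z i)) (milnorBracket a b c X (onb x y z i))
    + (1/4) * ∑ i : Fin 3, ∑ j : Fin 3,
        (gMet x y z (milnorBracket a b c (onb x y z i) (onb x y z j)) X) ^ 2

theorem Real.inv_sqrt_mul_inv_sqrt {r : ℝ} (hr : 0 ≤ r) : (√r)⁻¹ * (√r)⁻¹ = r⁻¹ := by
  rw [← mul_inv, Real.mul_self_sqrt hr]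

theorem killingF_single_zero (a b c : ℝ) :
    killingF a b c (Pi.single 0 1) (Pi.single 0 1) = -2 * (a * c) := by
  simp only [killingF, milnorBracket, Fin.sum_univ_three, Pi.single_apply, Matrix.cons_val,
    Matrix.cons_val_zero, Matrix.cons_val_one, Fin.isValue, Fin.reduceEq, ↓reduceIte]
  ring

theorem sum_gMet_milnorBracket_single_zero_onb (a b c x y z : ℝ) (hy : 0 ≤ y) (hz : 0 ≤ z) :
    ∑ i : Fin 3, gMet x y z (milnorBracket a b c (Pi.single 0 1) (onb x y z i))
        (milnorBracket a b c (Pi.single 0 1) (onb x y z i))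
      = a ^ 2 * z / y + c ^ 2 * y / z := by
  simp only [gMet, milnorBracket, onb, Fin.sum_univ_three, Pi.single_apply, Pi.smul_apply,
    smul_eq_mul, Matrix.cons_val, Matrix.cons_val_zero, Matrix.cons_val_one, Fin.isValue,
    Fin.reduceEq, ↓reduceIte]
  linear_combination (a ^ 2 * z) * Real.inv_sqrt_mul_inv_sqrt hy
    + (c ^ 2 * y) * Real.inv_sqrt_mul_inv_sqrt hz

theorem sum_sq_gMet_milnorBracket_onb_single_zero (a b c x y z : ℝ) (hy : 0 ≤ y) (hz : 0 ≤ z) :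
    ∑ i : Fin 3, ∑ j : Fin 3,
        (gMet x y z (milnorBracket a b c (onb x y z i) (onb x y z j)) (Pi.single 0 1)) ^ 2
      = 2 * (b ^ 2 * x ^ 2 / (y * z)) := by
  simp only [gMet, milnorBracket, onb, Fin.sum_univ_three, Pi.single_apply, Pi.smul_apply,
    smul_eq_mul, Matrix.cons_val, Matrix.cons_val_zero, Matrix.cons_val_one, Fin.isValue,
    Fin.reduceEq, ↓reduceIte]
  linear_combination (2 * b ^ 2 * x ^ 2) * ((√z)⁻¹ ^ 2 * Real.inv_sqrt_mul_inv_sqrt hy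
    + y⁻¹ * Real.inv_sqrt_mul_inv_sqrt hz)

theorem ric_uu_formula_general (a b c x y z : ℝ) (hy : 0 < y) (hz : 0 < z) :
    ricQ a b c x y z (Pi.single 0 1)
      = (1 / (2 * (y * z))) * (b ^ 2 * x ^ 2 - (c * y - a * z) ^ 2) := by
  rw [ricQ, killingF_single_zero, sum_gMet_milnorBracket_single_zero_onb a b c x y z hy.le hz.le,
    sum_sq_gMet_milnorBracket_onb_single_zero a b c x y z hy.le hz.le]
  field_simp
  ring

/-- For the unimodular Lie algebra with Milnor basis `{u,v,w}` and metric `(x,y,z)`,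
`Ric(u,u) = (1/(2yz)) (b²x² − (cy − az)²)`. -/
theorem ric_uu_formula (a b c x y z : ℝ) (hx : 0 < x) (hy : 0 < y) (hz : 0 < z) :
    ricQ a b c x y z (Pi.single 0 1)
      = (1 / (2 * (y * z))) * (b ^ 2 * x ^ 2 - (c * y - a * z) ^ 2) :=
  ric_uu_formula_general a b c x y z hy hz

end
end

section
/- Every 3-dimensional unimodular real Lie algebra admits a Milnor basis, i.e. a basis {u,v,w} with [u,v]=aw, [v,w]=bu, [w,u]=cv for some real numbers a, b, c. -/
/-!
Transport the bracket to `ℝ³` (indices are mod 3). Any alternating bilinear map there factors as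
`β x y = M (x × y)`, and `tr (β eₖ)` is the difference of the two off-diagonal entries
`⟪eₖ₊₁, M eₖ₊₂⟫` and `⟪eₖ₊₂, M eₖ₊₁⟫`, so unimodularity says exactly that `M` is symmetric. An
orthonormal eigenbasis `b` of `M` is then a Milnor basis: `bᵢ × bᵢ₊₁` is orthogonal to `bᵢ` and
`bᵢ₊₁`, hence a multiple of `bᵢ₊₂`, which `M` only rescales.
-/

open scoped Matrix RealInnerProductSpace

theorem Fin.eq_or_eq_add_one_or_eq_add_two (i j : Fin 3) : j = i ∨ j = i + 1 ∨ j = i + 2 := by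
  revert i j; decide

theorem crossProduct_single_add_one {R : Type*} [CommRing R] (i : Fin 3) :
    Pi.single i (1 : R) ⨯₃ Pi.single (i + 1) 1 = Pi.single (i + 2) 1 := by
  fin_cases i <;> ext j <;> fin_cases j <;> simp [cross_apply]

theorem crossProduct_single_add_two {R : Type*} [CommRing R] (i : Fin 3) :
    Pi.single i (1 : R) ⨯₃ Pi.single (i + 2) 1 = -Pi.single (i + 1) 1 := by
  fin_cases i <;> ext j <;> fin_cases j <;> simp [cross_apply]

theorem LinearMap.IsAlt.exists_eq_crossProduct_compr₂ {R N : Type*} [CommRing R] [AddCommGroup N]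
    [Module R N] {β : (Fin 3 → R) →ₗ[R] (Fin 3 → R) →ₗ[R] N} (hβ : β.IsAlt) :
    ∃ M : (Fin 3 → R) →ₗ[R] N, β = crossProduct.compr₂ M := by
  refine ⟨(Pi.basisFun R (Fin 3)).constr R fun i => β (Pi.single (i + 1) 1) (Pi.single (i + 2) 1),
    LinearMap.ext_basis (Pi.basisFun R (Fin 3)) (Pi.basisFun R (Fin 3)) fun i j => ?_⟩
  obtain rfl | rfl | rfl := Fin.eq_or_eq_add_one_or_eq_add_two i j
  · simp [hβ.self_eq_zero, cross_self]
  · simp [crossProduct_single_add_one, add_assoc]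
  · simp [crossProduct_single_add_two, add_assoc, hβ.neg]

theorem LinearMap.isSymmetric_of_basis {𝕜 E ι : Type*} [RCLike 𝕜] [NormedAddCommGroup E]
    [InnerProductSpace 𝕜 E] (b : Module.Basis ι 𝕜 E) {T : E →ₗ[𝕜] E}
    (h : ∀ i j, inner 𝕜 (T (b i)) (b j) = inner 𝕜 (b i) (T (b j))) : T.IsSymmetric := by
  have : innerₛₗ 𝕜 ∘ₛₗ T = (innerₛₗ 𝕜).compl₂ T := LinearMap.ext_basis b b h
  exact fun x y => LinearMap.congr_fun₂ this x y

theorem OrthonormalBasis.eq_inner_smul_of_inner_eq_zero {𝕜 E : Type*} [RCLike 𝕜]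
    [NormedAddCommGroup E] [InnerProductSpace 𝕜 E] (b : OrthonormalBasis (Fin 3) 𝕜 E) {i : Fin 3}
    {v : E} (h₀ : inner 𝕜 (b i) v = 0) (h₁ : inner 𝕜 (b (i + 1)) v = 0) :
    v = inner 𝕜 (b (i + 2)) v • b (i + 2) := by
  conv_lhs => rw [← b.sum_repr' v]
  refine Fintype.sum_eq_single _ fun j hj => ?_
  obtain rfl | rfl | rfl := Fin.eq_or_eq_add_one_or_eq_add_two i j
  · simp [h₀]
  · simp [h₁]
  · exact absurd rfl hj

local notation "𝔼³" => EuclideanSpace ℝ (Fin 3)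
local notation "𝐞" => EuclideanSpace.basisFun (Fin 3) ℝ

noncomputable def euclideanCross : 𝔼³ →ₗ[ℝ] 𝔼³ →ₗ[ℝ] 𝔼³ :=
  (crossProduct.compl₁₂ (WithLp.linearEquiv 2 ℝ (Fin 3 → ℝ)).toLinearMap
    (WithLp.linearEquiv 2 ℝ (Fin 3 → ℝ)).toLinearMap).compr₂
    (WithLp.linearEquiv 2 ℝ (Fin 3 → ℝ)).symm.toLinearMap

theorem euclideanCross_apply (x y : 𝔼³) :
    euclideanCross x y = WithLp.toLp 2 (x.ofLp ⨯₃ y.ofLp) := rfl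

theorem inner_self_euclideanCross (x y : 𝔼³) : ⟪x, euclideanCross x y⟫ = 0 := by
  simpa [euclideanCross_apply, PiLp.inner_apply, dotProduct, mul_comm] using
    dot_self_cross x.ofLp y.ofLp

theorem inner_euclideanCross_self (x y : 𝔼³) : ⟪y, euclideanCross x y⟫ = 0 := by
  simpa [euclideanCross_apply, PiLp.inner_apply, dotProduct, mul_comm] using
    dot_cross_self x.ofLp y.ofLp

theorem euclideanCross_self (x : 𝔼³) : euclideanCross x x = 0 := by
  simp [euclideanCross_apply, cross_self]

theorem euclideanCross_basisFun_add_one (i : Fin 3) :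
    euclideanCross (𝐞 i) (𝐞 (i + 1)) = 𝐞 (i + 2) := by
  simp [euclideanCross_apply, crossProduct_single_add_one]

theorem euclideanCross_basisFun_add_two (i : Fin 3) :
    euclideanCross (𝐞 i) (𝐞 (i + 2)) = -𝐞 (i + 1) := by
  simp [euclideanCross_apply, crossProduct_single_add_two]

theorem LinearMap.IsAlt.exists_eq_euclideanCross_compr₂ {N : Type*} [AddCommGroup N] [Module ℝ N]
    {β : 𝔼³ →ₗ[ℝ] 𝔼³ →ₗ[ℝ] N} (hβ : β.IsAlt) : ∃ M : 𝔼³ →ₗ[ℝ] N, β = euclideanCross.compr₂ M := by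
  let e := WithLp.linearEquiv 2 ℝ (Fin 3 → ℝ)
  obtain ⟨M, hM⟩ := LinearMap.IsAlt.exists_eq_crossProduct_compr₂
    (β := β.compl₁₂ e.symm.toLinearMap e.symm.toLinearMap) fun x => hβ _
  refine ⟨M ∘ₗ e.toLinearMap, LinearMap.ext₂ fun x y => ?_⟩
  simpa [e, euclideanCross_apply] using LinearMap.congr_fun₂ hM x.ofLp y.ofLp

theorem trace_euclideanCross_compr₂_basisFun (M : 𝔼³ →ₗ[ℝ] 𝔼³) (k : Fin 3) :
    LinearMap.trace ℝ 𝔼³ (euclideanCross.compr₂ M (𝐞 k)) =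
      ⟪𝐞 (k + 1), M (𝐞 (k + 2))⟫ - ⟪𝐞 (k + 2), M (𝐞 (k + 1))⟫ := by
  rw [LinearMap.trace_eq_sum_inner _ 𝐞,
    ← Fintype.sum_equiv (Equiv.addLeft k) _ _ fun _ => rfl, Fin.sum_univ_three]
  simp only [Equiv.coe_addLeft, add_zero, LinearMap.compr₂_apply, euclideanCross_self,
    euclideanCross_basisFun_add_one, euclideanCross_basisFun_add_two, map_zero, map_neg,
    inner_zero_right, inner_neg_right]
  ring

theorem LinearMap.isSymmetric_of_trace_euclideanCross_compr₂_eq_zero {M : 𝔼³ →ₗ[ℝ] 𝔼³}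
    (h : ∀ x, LinearMap.trace ℝ 𝔼³ (euclideanCross.compr₂ M x) = 0) : M.IsSymmetric := by
  have hoff (k : Fin 3) : ⟪𝐞 (k + 1), M (𝐞 (k + 2))⟫ = ⟪𝐞 (k + 2), M (𝐞 (k + 1))⟫ := by
    linarith [h (𝐞 k), trace_euclideanCross_compr₂_basisFun M k]
  refine LinearMap.isSymmetric_of_basis (𝐞).toBasis fun i j => ?_
  simp only [OrthonormalBasis.coe_toBasis]
  obtain rfl | rfl | rfl := Fin.eq_or_eq_add_one_or_eq_add_two i j
  · exact real_inner_comm _ _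
  · simpa [real_inner_comm, add_assoc] using (hoff (i + 2)).symm
  · simpa [real_inner_comm, add_assoc] using hoff (i + 1)

theorem OrthonormalBasis.exists_euclideanCross_add_one_eq_smul (b : OrthonormalBasis (Fin 3) ℝ 𝔼³)
    (i : Fin 3) : ∃ c : ℝ, euclideanCross (b i) (b (i + 1)) = c • b (i + 2) :=
  ⟨_, b.eq_inner_smul_of_inner_eq_zero (inner_self_euclideanCross _ _)
    (inner_euclideanCross_self _ _)⟩

theorem LinearMap.IsAlt.exists_orthonormalBasis_apply_add_one_eq_smul
    {β : 𝔼³ →ₗ[ℝ] 𝔼³ →ₗ[ℝ] 𝔼³} (hβ : β.IsAlt) (htr : ∀ x, LinearMap.trace ℝ 𝔼³ (β x) = 0) :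
    ∃ B : OrthonormalBasis (Fin 3) ℝ 𝔼³, ∀ i, ∃ a : ℝ, β (B i) (B (i + 1)) = a • B (i + 2) := by
  obtain ⟨M, rfl⟩ := hβ.exists_eq_euclideanCross_compr₂
  have hM := LinearMap.isSymmetric_of_trace_euclideanCross_compr₂_eq_zero htr
  have hn : Module.finrank ℝ 𝔼³ = 3 := finrank_euclideanSpace_fin
  refine ⟨hM.eigenvectorBasis hn, fun i => ?_⟩
  obtain ⟨c, hc⟩ := (hM.eigenvectorBasis hn).exists_euclideanCross_add_one_eq_smul i
  exact ⟨c * hM.eigenvalues hn (i + 2), by simp [hc, hM.apply_eigenvectorBasis, smul_smul]⟩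

theorem LieAlgebra.exists_basis_lie_add_one_eq_smul_of_finrank_eq_three (L : Type*) [LieRing L]
    [LieAlgebra ℝ L] (hdim : Module.finrank ℝ L = 3)
    (hunimod : ∀ X : L, LinearMap.trace ℝ L (LieAlgebra.ad ℝ L X) = 0) :
    ∃ B : Module.Basis (Fin 3) ℝ L, ∀ i, ∃ a : ℝ, ⁅B i, B (i + 1)⁆ = a • B (i + 2) := by
  have : Module.Finite ℝ L := Module.finite_of_finrank_pos (by omega)
  let f : L ≃ₗ[ℝ] 𝔼³ := LinearEquiv.ofFinrankEq L 𝔼³ (by simp [hdim])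
  let β : 𝔼³ →ₗ[ℝ] 𝔼³ →ₗ[ℝ] 𝔼³ :=
    f.conj.toLinearMap ∘ₗ (LieAlgebra.ad ℝ L : L →ₗ[ℝ] Module.End ℝ L) ∘ₗ f.symm.toLinearMap
  have hβ : β.IsAlt := fun x => by simp [β, LinearEquiv.conj_apply]
  have htr (x : 𝔼³) : LinearMap.trace ℝ 𝔼³ (β x) = 0 :=
    (LinearMap.trace_conj' _ f).trans (hunimod _)
  obtain ⟨B, hB⟩ := hβ.exists_orthonormalBasis_apply_add_one_eq_smul htr
  refine ⟨B.toBasis.map f.symm, fun i => ?_⟩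
  obtain ⟨a, ha⟩ := hB i
  exact ⟨a, f.injective (by simpa [β, LinearEquiv.conj_apply] using ha)⟩

theorem exists_milnor_basis_general (L : Type*) [LieRing L] [LieAlgebra ℝ L]
    (hdim : Module.finrank ℝ L = 3)
    (hunimod : ∀ X : L, LinearMap.trace ℝ L (LieAlgebra.ad ℝ L X) = 0) :
    ∃ (a b c : ℝ) (B : Module.Basis (Fin 3) ℝ L),
      ⁅B 0, B 1⁆ = a • B 2 ∧ ⁅B 1, B 2⁆ = b • B 0 ∧ ⁅B 2, B 0⁆ = c • B 1 := by
  obtain ⟨B, hB⟩ := LieAlgebra.exists_basis_lie_add_one_eq_smul_of_finrank_eq_three L hdim hunimod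
  obtain ⟨a, ha⟩ := hB 0
  obtain ⟨b, hb⟩ := hB 1
  obtain ⟨c, hc⟩ := hB 2
  exact ⟨a, b, c, B, ha, hb, hc⟩

/-- Every 3-dimensional unimodular real Lie algebra (i.e. `tr (ad X) = 0` for all `X`)
admits a Milnor basis: a basis `{u, v, w}` with `[u,v] = a•w`, `[v,w] = b•u`, `[w,u] = c•v`
for some real numbers `a, b, c`. -/
theorem exists_milnor_basis (L : Type*) [LieRing L] [LieAlgebra ℝ L]
    [Module.Finite ℝ L] (hdim : Module.finrank ℝ L = 3)
    (hunimod : ∀ X : L, LinearMap.trace ℝ L (LieAlgebra.ad ℝ L X) = 0) :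
    ∃ (a b c : ℝ) (B : Module.Basis (Fin 3) ℝ L),
      ⁅B 0, B 1⁆ = a • B 2 ∧ ⁅B 1, B 2⁆ = b • B 0 ∧ ⁅B 2, B 0⁆ = c • B 1 :=
  exists_milnor_basis_general L hdim hunimod
end
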